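/- arXiv:1305.0602 — 2 statements merged into one kernel-verified Lean document; each statement's English description precedes it below -/
import Mathlib

section
/- For 0 ≤ m ≤ n ≤ 2m, α_{m,n} is nonzero and its evaluation at q^{1/2} = 1 is nonzero; hence α_{m,n} is not divisible by Φ̃_1 = q^{1/2} - q^{-1/2}, i.e., d_1(α_{m,n}) = 0. -/
open Finset LaurentPolynomial

noncomputable section

/-- `ℤ[q^{1/2}, q^{-1/2}]`, with `T 1` representing `q^{1/2}` (so `q = T 2`). -/
abbrev R : Type := LaurentPolynomial ℤ

/-- quantum integer `{i} = q^{i/2} - q^{-i/2}`. -/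
def qint (i : ℤ) : R := T i - T (-i)

/-- falling product `{i}_n = {i}{i-1}⋯{i-n+1}`. -/
def qfall (i : ℤ) (n : ℕ) : R := ∏ k ∈ Finset.range n, qint (i - k)

/-- quantum factorial `{n}! = {n}_n`. -/
def qfact (n : ℕ) : R := qfall n n

/-- balanced quantum binomial `[i choose n] = {i}_n / {n}!`,
defined inside `R` via the Pascal-type recursion
`[i+1 choose n+1] = q^{-(i-n)/2}[i choose n] + q^{(n+1)/2}[i choose n+1]`. -/
def qbinom : ℕ → ℕ → R
  | _, 0 => 1
  | 0, _ + 1 => 0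
  | i + 1, n + 1 => T (-((i : ℤ) - n)) * qbinom i n + T ((n : ℤ) + 1) * qbinom i (n + 1)

/-- `α_{m,n} = Σ_{k=0}^{m} (-1)^k [2m+1 choose k][2m+n-2k+1 choose 2n+1]`. -/
def qalpha (m n : ℕ) : R :=
  ∑ k ∈ Finset.range (m + 1),
    (-1 : R) ^ k * qbinom (2 * m + 1) k * qbinom (2 * m + n + 1 - 2 * k) (2 * n + 1)

/-- symmetric cyclotomic polynomial `Φ̃_l = q^{-φ(l)/2} Φ_l(q)
  = ∏_{d ∣ l} (q^{d/2} - q^{-d/2})^{μ(l/d)}`. -/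
def qcyc (l : ℕ) : R :=
  T (-(Nat.totient l : ℤ)) *
    Polynomial.eval₂ (Int.castRingHom R) (T 2) (Polynomial.cyclotomic l ℤ)

/-!
Specialising `q^{1/2} ↦ 1` turns the balanced quantum binomials into ordinary binomials and
kills `Φ̃_1`, so it suffices that the classical alternating sum is nonzero. That sum is the
coefficient of `x^{2m-n}` in
`(1 - x²)^{2m+1} / (1 - x)^{2n+2} = (1 + x)^{2m+1} / (1 - x)^{2n+1-2m}`, a series with
nonnegative coefficients whose `x^{2m-n}`-coefficient is at least `C(2m+1, 2m-n) > 0`.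
-/

namespace PowerSeries

variable {S : Type*}

theorem coeff_one_sub_X_sq_pow_mul [CommRing S] (N d : ℕ) (f : S⟦X⟧) :
    coeff d ((1 - X ^ 2) ^ N * f) = ∑ k ∈ range (N + 1),
      if 2 * k ≤ d then (-1) ^ k * N.choose k * coeff (d - 2 * k) f else 0 := by
  rw [sub_eq_neg_add, add_pow, sum_mul, map_sum]
  refine sum_congr rfl fun k _ => ?_
  have hterm : (-X ^ 2 : S⟦X⟧) ^ k * 1 ^ (N - k) * (N.choose k : S⟦X⟧)
      = C ((-1) ^ k * N.choose k : S) * X ^ (2 * k) := by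
    rw [neg_pow, ← pow_mul, one_pow, mul_one, map_mul, map_pow, map_neg, map_one, map_natCast]
    ring
  rw [hterm, mul_assoc, coeff_C_mul, coeff_X_pow_mul']
  split_ifs <;> simp [mul_assoc]

theorem one_sub_X_sq_pow_mul_invOneSubPow [CommRing S] (N e : ℕ) :
    (1 - X ^ 2 : S⟦X⟧) ^ N * (invOneSubPow S (e + N)).val
      = (1 + X) ^ N * (invOneSubPow S e).val := by
  rw [show (1 - X ^ 2 : S⟦X⟧) = (1 + X) * (1 - X) by ring, mul_pow, mul_assoc,
    one_sub_pow_mul_invOneSubPow_val_add_eq_invOneSubPow_val]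

theorem coeff_mul_coeff_zero_le_coeff_mul [CommSemiring S] [PartialOrder S] [IsOrderedRing S]
    {f g : S⟦X⟧} (hf : ∀ i, 0 ≤ coeff i f) (hg : ∀ i, 0 ≤ coeff i g) (d : ℕ) :
    coeff d f * coeff 0 g ≤ coeff d (f * g) := by
  rw [coeff_mul]
  exact single_le_sum (f := fun p : ℕ × ℕ => coeff p.1 f * coeff p.2 g)
    (fun p _ => mul_nonneg (hf _) (hg _)) (mem_antidiagonal.2 (add_zero d) : (d, 0) ∈ _)

theorem coeff_one_add_X_pow [CommSemiring S] (N i : ℕ) :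
    coeff i ((1 + X : S⟦X⟧) ^ N) = N.choose i := by
  rw [← Polynomial.coe_X, ← Polynomial.coe_one, ← Polynomial.coe_add, ← Polynomial.coe_pow,
    Polynomial.coeff_coe, Polynomial.coeff_one_add_X_pow]

theorem choose_le_coeff_one_add_X_pow_mul_invOneSubPow [CommRing S] [PartialOrder S]
    [IsOrderedRing S] (N d e : ℕ) :
    (N.choose d : S) ≤ coeff d ((1 + X) ^ N * (invOneSubPow S (e + 1)).val) := by
  have hinv : ∀ i, coeff i (invOneSubPow S (e + 1)).val = (e + i).choose e := fun i => by
    rw [invOneSubPow_val_succ_eq_mk_add_choose, coeff_mk]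
  calc (N.choose d : S)
      = coeff d ((1 + X : S⟦X⟧) ^ N) * coeff 0 (invOneSubPow S (e + 1)).val := by
        rw [coeff_one_add_X_pow, hinv, add_zero, Nat.choose_self, Nat.cast_one, mul_one]
    _ ≤ _ := coeff_mul_coeff_zero_le_coeff_mul (fun i => by simp [coeff_one_add_X_pow])
        (fun i => by simp [hinv]) d

end PowerSeries

def classicalAlpha (m n : ℕ) : ℤ :=
  ∑ k ∈ range (m + 1),
    (-1) ^ k * (2 * m + 1).choose k * (2 * m + n + 1 - 2 * k).choose (2 * n + 1)

open PowerSeries in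
theorem classicalAlpha_eq_coeff (m n : ℕ) (h : n ≤ 2 * m) :
    classicalAlpha m n
      = coeff (2 * m - n) ((1 - X ^ 2) ^ (2 * m + 1) * (invOneSubPow ℤ (2 * n + 2)).val) := by
  rw [classicalAlpha, coeff_one_sub_X_sq_pow_mul,
    ← sum_subset (range_subset_range.2 (by omega : m + 1 ≤ 2 * m + 1 + 1))]
  · refine sum_congr rfl fun k _ => ?_
    split_ifs with hk
    · rw [invOneSubPow_val_succ_eq_mk_add_choose, coeff_mk,
        show 2 * n + 1 + (2 * m - n - 2 * k) = 2 * m + n + 1 - 2 * k by omega]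
    · rw [Nat.choose_eq_zero_of_lt (n := 2 * m + n + 1 - 2 * k) (by omega), Nat.cast_zero,
        mul_zero]
  · intro k _ hk
    rw [mem_range] at hk
    rw [if_neg (by omega)]

open PowerSeries in
theorem classicalAlpha_pos (m n : ℕ) (h1 : m ≤ n) (h2 : n ≤ 2 * m) :
    0 < classicalAlpha m n := by
  rw [classicalAlpha_eq_coeff m n h2,
    show 2 * n + 2 = (2 * n - 2 * m + 1) + (2 * m + 1) by omega,
    one_sub_X_sq_pow_mul_invOneSubPow]
  exact (Nat.cast_pos.2 (Nat.choose_pos (by omega))).trans_le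
    (choose_le_coeff_one_add_X_pow_mul_invOneSubPow _ _ _)

def evalAtOne : R →+* ℤ := LaurentPolynomial.eval₂ (RingHom.id ℤ) 1

@[simp]
theorem evalAtOne_T (i : ℤ) : evalAtOne (T i) = 1 := by
  simp [evalAtOne]

theorem evalAtOne_qbinom (i n : ℕ) : evalAtOne (qbinom i n) = i.choose n := by
  induction i generalizing n with
  | zero => cases n <;> simp [qbinom]
  | succ i ih =>
    cases n with
    | zero => simp [qbinom]
    | succ n => simp [qbinom, ih, Nat.choose_succ_succ]

theorem evalAtOne_qalpha (m n : ℕ) : evalAtOne (qalpha m n) = classicalAlpha m n := by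
  simp [qalpha, classicalAlpha, evalAtOne_qbinom]

theorem evalAtOne_qcyc_one : evalAtOne (qcyc 1) = 0 := by
  simp [qcyc]

/-- For `0 ≤ m ≤ n ≤ 2m`, `α_{m,n}` is nonzero and not divisible by
`Φ̃_1 = q^{1/2} - q^{-1/2}`, i.e. `d_1(α_{m,n}) = 0`. -/
theorem stmt_11 (m n : ℕ) (h1 : m ≤ n) (h2 : n ≤ 2 * m) :
    qalpha m n ≠ 0 ∧ ¬ qcyc 1 ∣ qalpha m n := by
  have hpos : evalAtOne (qalpha m n) ≠ 0 := by
    rw [evalAtOne_qalpha]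
    exact (classicalAlpha_pos m n h1 h2).ne'
  refine ⟨fun h => hpos (by rw [h, map_zero]), fun ⟨c, hc⟩ => hpos ?_⟩
  rw [hc, map_mul, evalAtOne_qcyc_one, zero_mul]
end
end

section
/- In the representation ring of U_h(sl_2), S_l = Σ_{k=0}^{l} (-1)^k [2l+1 choose k] V_{2l-2k}, where S_l = ∏_{i=1}^{l}(V_2 - (q^i + 1 + q^{-i})) and V_m denotes the class of the (m+1)-dimensional irreducible representation, using the Clebsch-Gordan multiplication V_2 · V_m = V_{m+2} + V_m + V_{m-2} (for m ≥ 2) and V_2 · V_0 = V_2. -/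
open Finset LaurentPolynomial

noncomputable section

lemma qbinom_zero_right (i : ℕ) : qbinom i 0 = 1 := by cases i <;> rfl

lemma qbinom_succ_succ (i n : ℕ) : qbinom (i+1) (n+1) =
    T (-((i : ℤ) - n)) * qbinom i n + T ((n : ℤ) + 1) * qbinom i (n + 1) := rfl

lemma qbinom_of_lt : ∀ {i k : ℕ}, i < k → qbinom i k = 0 := by
  intro i
  induction i with
  | zero => intro k hk; obtain ⟨m, rfl⟩ : ∃ m, k = m + 1 := ⟨k - 1, by omega⟩; rfl
  | succ i ih =>
    intro k hk
    obtain ⟨m, rfl⟩ : ∃ m, k = m + 1 := ⟨k - 1, by omega⟩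
    rw [qbinom_succ_succ, ih (by omega), ih (by omega), mul_zero, mul_zero, add_zero]

lemma qbinom_self : ∀ n, qbinom n n = 1 := by
  intro n
  induction n with
  | zero => rfl
  | succ n ih =>
    rw [qbinom_succ_succ, ih, qbinom_of_lt (by omega), mul_zero, add_zero, mul_one]
    simp

lemma qbinom_succ_one (i : ℕ) : qbinom (i+1) 1 =
    T (-(i : ℤ)) + T 1 * qbinom i 1 := by
  have := qbinom_succ_succ i 0
  simpa [qbinom_zero_right] using this

lemma qint_mul_qbinom_one : ∀ i : ℕ, qint 1 * qbinom i 1 = qint (i : ℤ) := by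
  intro i
  induction i with
  | zero => simp [qint, qbinom_of_lt]
  | succ i ih =>
    rw [qbinom_succ_one, mul_add, mul_comm (qint 1) (T 1 * qbinom i 1), mul_assoc,
      mul_comm (qbinom i 1) (qint 1), ih]
    simp only [qint, sub_mul, mul_sub, ← T_add]
    push_cast
    ring_nf

lemma qbinom_mirror : ∀ (i n : ℕ), qbinom (i+1) (n+1) =
    T ((i:ℤ) - n) * qbinom i n + T (-((n:ℤ)+1)) * qbinom i (n+1) := by
  intro i
  induction i with
  | zero =>
    intro n
    cases n with
    | zero => simp [qbinom_self, qbinom_of_lt]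
    | succ m => simp [qbinom_succ_succ, qbinom_of_lt]
  | succ i ih =>
    intro n
    cases n with
    | zero =>
      rw [qbinom_succ_one, qbinom_zero_right, mul_one]
      have h := qint_mul_qbinom_one ((i:ℕ)+1)
      simp only [qint, sub_mul] at h
      push_cast at h
      -- h : T 1 * qbinom (i+1) 1 - T (-1) * qbinom (i+1) 1 = T (i+1) - T (-(i+1))
      have : T (-((i:ℤ)+1)) + T 1 * qbinom (i+1) 1 = T ((i:ℤ)+1) + T (-1) * qbinom (i+1) 1 := by
        linear_combination h
      rw [qbinom_succ_one] at this ⊢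
      push_cast [sub_zero] at this ⊢
      linear_combination this
    | succ m =>
      rw [qbinom_succ_succ (i+1) (m+1)]
      conv_lhs => rw [ih m, ih (m+1)]
      conv_rhs => rw [qbinom_succ_succ i m, qbinom_succ_succ i (m+1)]
      simp only [mul_add, ← mul_assoc, ← T_add]
      push_cast
      ring_nf

lemma qbinom_mirror_one (i : ℕ) : qbinom (i+1) 1 = T (i:ℤ) + T (-1) * qbinom i 1 := by
  have := qbinom_mirror i 0
  simpa [qbinom_zero_right] using this

lemma qbinom_symm : ∀ (n k : ℕ), k ≤ n → qbinom n (n - k) = qbinom n k := by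
  intro n
  induction n with
  | zero => intro k hk; interval_cases k; rfl
  | succ n ih =>
    intro k hk
    cases k with
    | zero => simp [qbinom_self, qbinom_zero_right]
    | succ k =>
      rcases Nat.lt_or_ge k n with hlt | hge
      · have h1 : n + 1 - (k + 1) = (n - k - 1) + 1 := by omega
        rw [h1, qbinom_succ_succ, qbinom_mirror]
        have e1 : n - k - 1 = n - (k+1) := by omega
        rw [e1, ih (k+1) (by omega)]
        have c1 : (-((n:ℤ) - (n - (k+1) : ℕ))) = -((k:ℤ)+1) := by
          have : ((n - (k+1) : ℕ) : ℤ) = (n:ℤ) - (k+1) := by omega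
          rw [this]; ring
        have c2 : (((n - (k+1) : ℕ) : ℤ) + 1) = (n:ℤ) - k := by omega
        rw [c1, c2]
        have e3 : n - (k+1) + 1 = n - k := by omega
        rw [e3, ih k (by omega)]
        ring
      · have hk' : k = n := by omega
        subst hk'
        simp [qbinom_self, qbinom_zero_right]

def qpad (i : ℕ) : ℕ → R
  | 0 => 0
  | m + 1 => qbinom i m

lemma qbinom_key (i m : ℕ) : qbinom (i+2) (m+1) =
    (T ((i:ℤ)+1) + T (-((i:ℤ)+1))) * qbinom i m + qbinom i (m+1) + qpad i m := by
  cases m with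
  | zero =>
    simp only [zero_add, qpad]
    rw [show i + 2 = i + 1 + 1 from rfl, qbinom_succ_one (i+1), qbinom_mirror_one i,
      qbinom_zero_right]
    simp only [mul_add, mul_one, add_zero, ← mul_assoc, ← T_add]
    push_cast
    ring_nf
    simp only [T_zero, one_mul]
    try ring
  | succ m =>
    simp only [qpad]
    rw [show i + 2 = i + 1 + 1 from rfl, qbinom_succ_succ (i+1) (m+1)]
    conv_lhs => rw [qbinom_mirror i m, qbinom_mirror i (m+1)]
    simp only [mul_add, ← mul_assoc, ← T_add]
    push_cast
    ring_nf
    simp only [T_zero, one_mul]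
    try ring

lemma step_lemma {A : Type*} [CommRing A] (φ : R →+* A) (V : ℕ → A)
    (hV0 : V 0 = 1)
    (hV2 : ∀ m, 2 ≤ m → V 2 * V m = V (m + 2) + V m + V (m - 2))
    (l : ℕ) :
    (∑ k ∈ Finset.range (l+1), (-1:A)^k * φ (qbinom (2*l+1) k) * V (2*l - 2*k)) *
      (V 2 - φ (T (2 * ((l:ℤ) + 1)) + 1 + T (-(2 * ((l:ℤ) + 1)))))
    = ∑ k ∈ Finset.range (l+2), (-1:A)^k * φ (qbinom (2*l+1+2) k) * V (2*l+2 - 2*k) := by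
  set tA : A := φ (T (((2*l+1:ℕ):ℤ) + 1) + T (-(((2*l+1:ℕ):ℤ) + 1))) with htA
  set S1 : A := ∑ k ∈ Finset.range l, (-1:A)^k * φ (qbinom (2*l+1) k) * V (2*l - 2*k + 2) with hS1
  set S2 : A := ∑ k ∈ Finset.range l, (-1:A)^k * φ (qbinom (2*l+1) k) * V (2*l - 2*k) with hS2
  set S3 : A := ∑ k ∈ Finset.range l, (-1:A)^k * φ (qbinom (2*l+1) k) * V (2*l - 2*k - 2) with hS3
  set aL : A := (-1:A)^l * φ (qbinom (2*l+1) l) with haL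
  set padl : A := (-1:A)^(l+1) * φ (qpad (2*l+1) l) with hpadl
  have hc : φ (T (2 * ((l:ℤ) + 1)) + 1 + T (-(2 * ((l:ℤ) + 1)))) = tA + 1 := by
    have e : 2 * ((l:ℤ) + 1) = ((2*l+1:ℕ):ℤ) + 1 := by push_cast; ring
    rw [e, map_add, map_add, map_one, htA, map_add]
    ring
  have hS4 : (∑ k ∈ Finset.range (l+1), (-1:A)^k * φ (qbinom (2*l+1) k) * V (2*l - 2*k))
      = S2 + aL := by
    rw [Finset.sum_range_succ, show 2*l - 2*l = 0 from by omega, hV0, mul_one]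
  have hmul : ∀ k ∈ Finset.range l,
      ((-1:A)^k * φ (qbinom (2*l+1) k) * V (2*l - 2*k)) * V 2
      = (-1:A)^k * φ (qbinom (2*l+1) k) * V (2*l - 2*k + 2)
        + (-1:A)^k * φ (qbinom (2*l+1) k) * V (2*l - 2*k)
        + (-1:A)^k * φ (qbinom (2*l+1) k) * V (2*l - 2*k - 2) := by
    intro k hk
    rw [Finset.mem_range] at hk
    have h := hV2 (2*l - 2*k) (by omega)
    rw [mul_assoc, mul_comm (V (2*l - 2*k)) (V 2), h]
    ring
  have hmulsum : (∑ k ∈ Finset.range (l+1), (-1:A)^k * φ (qbinom (2*l+1) k) * V (2*l - 2*k)) * V 2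
      = S1 + S2 + S3 + aL * V 2 := by
    rw [Finset.sum_mul, Finset.sum_range_succ, show 2*l - 2*l = 0 from by omega, hV0, mul_one,
      Finset.sum_congr rfl hmul, Finset.sum_add_distrib, Finset.sum_add_distrib]
  have hS1' : (∑ k ∈ Finset.range (l+1), (-1:A)^k * φ (qbinom (2*l+1) k) * V (2*l + 2 - 2*k))
      = S1 + aL * V 2 := by
    rw [Finset.sum_range_succ, show 2*l + 2 - 2*l = 2 from by omega]
    congr 1
    refine Finset.sum_congr rfl (fun k hk => ?_)
    rw [Finset.mem_range] at hk
    rw [show 2*l + 2 - 2*k = 2*l - 2*k + 2 from by omega]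
  have hA : (∑ k ∈ Finset.range l, (-1:A)^(k+1) * φ (qbinom (2*l+1) (k+1)) * V (2*l - 2*k))
      = S1 + aL * V 2 - V (2*l+2) := by
    have h := Finset.sum_range_succ'
      (fun k => (-1:A)^k * φ (qbinom (2*l+1) k) * V (2*l + 2 - 2*k)) l
    rw [hS1'] at h
    simp only [show ∀ k : ℕ, 2*l + 2 - 2*(k+1) = 2*l - 2*k from fun k => by omega,
      pow_zero, one_mul, qbinom_zero_right, map_one, Nat.mul_zero, Nat.sub_zero] at h
    linear_combination -h
  have hC : (∑ k ∈ Finset.range l, (-1:A)^(k+1) * φ (qpad (2*l+1) k) * V (2*l - 2*k))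
      = S3 - padl := by
    have h := Finset.sum_range_succ'
      (fun k => (-1:A)^(k+1) * φ (qpad (2*l+1) k) * V (2*l - 2*k)) l
    rw [Finset.sum_range_succ] at h
    simp only [show ∀ k : ℕ, 2*l - 2*(k+1) = 2*l - 2*k - 2 from fun k => by omega,
      show ∀ k : ℕ, ((-1:A))^(k+1+1) = (-1:A)^k from fun k => by ring,
      show ∀ k : ℕ, qpad (2*l+1) (k+1) = qbinom (2*l+1) k from fun k => rfl,
      show qpad (2*l+1) 0 = 0 from rfl, map_zero, mul_zero, zero_mul, add_zero,
      show 2*l - 2*l = 0 from by omega, hV0, mul_one] at h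
    rw [hS3, hpadl]
    linear_combination h
  have hsym : qbinom (2*l+1) (l+1) = qbinom (2*l+1) l := by
    have h := qbinom_symm (2*l+1) l (by omega)
    rw [show 2*l+1 - l = l+1 from by omega] at h
    exact h
  have hterm : ∀ k ∈ Finset.range l,
      (-1:A)^(k+1) * φ (qbinom (2*l+1+2) (k+1)) * V (2*l - 2*k)
      = -(tA * ((-1:A)^k * φ (qbinom (2*l+1) k) * V (2*l - 2*k)))
        + (-1:A)^(k+1) * φ (qbinom (2*l+1) (k+1)) * V (2*l - 2*k)
        + (-1:A)^(k+1) * φ (qpad (2*l+1) k) * V (2*l - 2*k) := by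
    intro k _
    rw [qbinom_key (2*l+1) k, map_add, map_add, map_mul, htA]
    ring
  have hlast : φ (qbinom (2*l+1+2) (l+1))
      = (tA + 1) * φ (qbinom (2*l+1) l) + φ (qpad (2*l+1) l) := by
    rw [qbinom_key (2*l+1) l, hsym, map_add, map_add, map_mul, htA]
    ring
  have hRHS : (∑ k ∈ Finset.range (l+2), (-1:A)^k * φ (qbinom (2*l+1+2) k) * V (2*l+2 - 2*k))
      = S1 + aL * V 2 - tA * S2 + S3 - (tA + 1) * aL := by
    rw [show l+2 = l+1+1 from rfl, Finset.sum_range_succ,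
      show 2*l+2 - 2*(l+1) = 0 from by omega, hV0, mul_one, Finset.sum_range_succ']
    simp only [show ∀ k : ℕ, 2*l+2 - 2*(k+1) = 2*l - 2*k from fun k => by omega,
      pow_zero, qbinom_zero_right, map_one, one_mul, Nat.mul_zero, Nat.sub_zero]
    rw [Finset.sum_congr rfl hterm, Finset.sum_add_distrib, Finset.sum_add_distrib,
      Finset.sum_neg_distrib, ← Finset.mul_sum, hA, hC, hlast]
    rw [hS2, haL, hpadl]
    ring
  calc (∑ k ∈ Finset.range (l+1), (-1:A)^k * φ (qbinom (2*l+1) k) * V (2*l - 2*k)) *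
      (V 2 - φ (T (2 * ((l:ℤ) + 1)) + 1 + T (-(2 * ((l:ℤ) + 1)))))
      = (∑ k ∈ Finset.range (l+1), (-1:A)^k * φ (qbinom (2*l+1) k) * V (2*l - 2*k)) * V 2
        - φ (T (2 * ((l:ℤ) + 1)) + 1 + T (-(2 * ((l:ℤ) + 1)))) *
          (∑ k ∈ Finset.range (l+1), (-1:A)^k * φ (qbinom (2*l+1) k) * V (2*l - 2*k)) := by
        ring
    _ = (S1 + S2 + S3 + aL * V 2) - (tA + 1) * (S2 + aL) := by rw [hmulsum, hS4, hc]
    _ = S1 + aL * V 2 - tA * S2 + S3 - (tA + 1) * aL := by ring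
    _ = _ := hRHS.symm

/-- In any commutative ring containing the image of `ℤ[q^{1/2},q^{-1/2}]` together with
elements `V m` (the classes of the irreducible representations) satisfying the
Clebsch-Gordan multiplication rules, the element
`S_l = ∏_{i=1}^{l}(V_2 - (q^i + 1 + q^{-i}))` expands as
`S_l = Σ_{k=0}^{l} (-1)^k [2l+1 choose k] V_{2l-2k}`. -/
theorem stmt_12 {A : Type*} [CommRing A] (φ : R →+* A) (V : ℕ → A)
    (hV0 : V 0 = 1)
    (hV20 : V 2 * V 0 = V 2)
    (hV21 : V 2 * V 1 = V 3 + V 1)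
    (hV2 : ∀ m, 2 ≤ m → V 2 * V m = V (m + 2) + V m + V (m - 2))
    (l : ℕ) :
    ∏ i ∈ Finset.range l,
        (V 2 - φ (T (2 * ((i : ℤ) + 1)) + 1 + T (-(2 * ((i : ℤ) + 1)))))
      = ∑ k ∈ Finset.range (l + 1),
          (-1 : A) ^ k * φ (qbinom (2 * l + 1) k) * V (2 * l - 2 * k) := by
  induction l with
  | zero => simp [qbinom_zero_right, hV0]
  | succ l ih =>
    rw [Finset.prod_range_succ, ih]
    have h := step_lemma φ V hV0 hV2 l
    simp only [show 2*(l+1)+1 = 2*l+1+2 from by ring,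
      show ∀ k : ℕ, 2*(l+1) - 2*k = 2*l+2 - 2*k from fun k => by omega,
      show l+1+1 = l+2 from rfl]
    exact h
end
end
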